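/- Modigliani–Miller separation: under the benchmark setup, let φ₀ be a cash-flow density continuous and positive exactly on an open interval I₀ ⊆ (0,∞) with binding map K₀ := F₂⁻¹ ∘ F₀ and finite portfolio value V(φ₀), and let a > 0. Define the shifted density φ(x) := φ₀(x − a), whose binding map is K(x) = K₀(x − a). Then the portfolio value of the shifted cash flow satisfies ∫ x · (φ(x)/φ₂(K(x))) · q(K(x)) dx = a · ∫_{I₂} q(y) dy + V(φ₀); that is, adding a risk-free amount a adds a times the bond price B = ∫_{I₂} q(y) dy to the value. -/

import Mathlib

open MeasureTheory Set Filter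

/-- The cumulative distribution function of a density `φ` (w.r.t. Lebesgue measure). -/
noncomputable def cdfOf (φ : ℝ → ℝ) (x : ℝ) : ℝ := ∫ t in Set.Iic x, φ t

/-!
Substituting `y = K₀ x` turns the bond price `∫_{I₂} q` into `∫_{I₀} K₀' · q ∘ K₀`, and
differentiating `F₂ ∘ K₀ = F₀` gives `K₀' = φ₀ / φ₂ ∘ K₀`, so this is the value of the cash flow
paying `1`. Translating by `a` turns the value of the shifted cash flow into
`∫_{I₀} (x + a) · K₀' · q ∘ K₀`, which splits into `V(φ₀) + a · B`.
-/

open Topology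

theorem HasStrictDerivAt.hasDerivAt_of_comp_eq {F G K : ℝ → ℝ} {s : Set ℝ} {x₀ f' g' : ℝ}
    (hF : HasStrictDerivAt F f' (K x₀)) (hf' : f' ≠ 0) (hG : HasDerivAt G g' x₀)
    (hFs : InjOn F s) (hs : s ∈ 𝓝 (K x₀)) (hK : ∀ᶠ x in 𝓝 x₀, K x ∈ s ∧ F (K x) = G x) :
    HasDerivAt K (g' / f') x₀ := by
  set g := hF.localInverse F f' (K x₀) hf'
  have hG₀ : F (K x₀) = G x₀ := hK.self_of_nhds.2
  have hg : HasDerivAt g f'⁻¹ (G x₀) := by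
    rw [← hG₀]; exact (hF.to_localInverse hf').hasDerivAt
  have hgK : g (G x₀) = K x₀ := by
    rw [← hG₀]; exact (hF.hasStrictFDerivAt_equiv hf').localInverse_apply_image
  have hFg : ∀ᶠ y in 𝓝 (G x₀), F (g y) = y := by
    rw [← hG₀]; exact (hF.hasStrictFDerivAt_equiv hf').eventually_right_inverse
  have hgG : ContinuousAt (g ∘ G) x₀ := hg.continuousAt.comp hG.continuousAt
  have hKg : K =ᶠ[𝓝 x₀] g ∘ G := by
    filter_upwards [hK, hG.continuousAt.eventually hFg, hgG.eventually_mem (hgK ▸ hs)]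
      with x hx hFgx hgx
    exact hFs hx.1 hgx (hx.2.trans hFgx.symm)
  rw [div_eq_inv_mul]
  exact (hg.comp x₀ hG).congr_of_eventuallyEq hKg

section ChangeOfVariables

variable {s : Set ℝ} {K K' : ℝ → ℝ}

theorem integral_image_eq_integral_deriv_mul_of_nonneg (hs : MeasurableSet s)
    (hK : ∀ x ∈ s, HasDerivWithinAt K (K' x) s x) (hinj : InjOn K s) (hK' : ∀ x ∈ s, 0 ≤ K' x)
    (q : ℝ → ℝ) : ∫ y in K '' s, q y = ∫ x in s, K' x * q (K x) :=
  (integral_image_eq_integral_abs_deriv_smul hs hK hinj q).trans <|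
    setIntegral_congr_fun hs fun x hx => by simp only [smul_eq_mul, abs_of_nonneg (hK' x hx)]

theorem IntegrableOn.deriv_mul_comp_of_nonneg {q : ℝ → ℝ} (hq : IntegrableOn q (K '' s))
    (hs : MeasurableSet s) (hK : ∀ x ∈ s, HasDerivWithinAt K (K' x) s x) (hinj : InjOn K s)
    (hK' : ∀ x ∈ s, 0 ≤ K' x) : IntegrableOn (fun x => K' x * q (K x)) s :=
  ((integrableOn_image_iff_integrableOn_abs_deriv_smul hs hK hinj q).1 hq).congr_fun
    (fun x hx => by simp only [smul_eq_mul, abs_of_nonneg (hK' x hx)]) hs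

end ChangeOfVariables

section cdfOf

variable {φ : ℝ → ℝ}

theorem cdfOf_sub_cdfOf (hi : Integrable φ) (a b : ℝ) :
    cdfOf φ b - cdfOf φ a = ∫ t in a..b, φ t :=
  intervalIntegral.integral_Iic_sub_Iic hi.integrableOn hi.integrableOn

theorem cdfOf_add_integral_Ioi (hi : Integrable φ) (x : ℝ) :
    cdfOf φ x + ∫ t in Ioi x, φ t = ∫ t, φ t :=
  intervalIntegral.integral_Iic_add_Ioi hi.integrableOn hi.integrableOn

theorem hasDerivAt_cdfOf (hc : Continuous φ) (hi : Integrable φ) (x : ℝ) :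
    HasDerivAt (cdfOf φ) (φ x) x := by
  have h := (intervalIntegral.integral_hasDerivAt_right (a := 0) (b := x) hi.intervalIntegrable
    hc.stronglyMeasurable.stronglyMeasurableAtFilter hc.continuousAt).const_add (cdfOf φ 0)
  exact h.congr_of_eventuallyEq
    (Eventually.of_forall fun u => eq_add_of_sub_eq' (cdfOf_sub_cdfOf hi 0 u))

theorem hasStrictDerivAt_cdfOf (hc : Continuous φ) (hi : Integrable φ) (x : ℝ) :
    HasStrictDerivAt (cdfOf φ) (φ x) x :=
  hasStrictDerivAt_of_hasDerivAt_of_continuousAt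
    (Eventually.of_forall (hasDerivAt_cdfOf hc hi)) hc.continuousAt

theorem continuous_cdfOf (hc : Continuous φ) (hi : Integrable φ) : Continuous (cdfOf φ) :=
  continuous_iff_continuousAt.2 fun x => (hasDerivAt_cdfOf hc hi x).continuousAt

theorem cdfOf_nonneg (hnn : ∀ x, 0 ≤ φ x) (x : ℝ) : 0 ≤ cdfOf φ x :=
  setIntegral_nonneg measurableSet_Iic fun t _ => hnn t

theorem cdfOf_le_integral (hnn : ∀ x, 0 ≤ φ x) (hi : Integrable φ) (x : ℝ) :
    cdfOf φ x ≤ ∫ t, φ t :=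
  setIntegral_le_integral hi (Eventually.of_forall hnn)

theorem strictMonoOn_cdfOf (hi : Integrable φ) {I : Set ℝ} (hI : I.OrdConnected)
    (hpos : ∀ x ∈ I, 0 < φ x) : StrictMonoOn (cdfOf φ) I := by
  intro x hx y hy hxy
  have h : 0 < ∫ t in x..y, φ t :=
    intervalIntegral.intervalIntegral_pos_of_pos_on hi.intervalIntegrable
      (fun t ht => hpos t (hI.out hx hy (Ioo_subset_Icc_self ht))) hxy
  linarith [cdfOf_sub_cdfOf hi x y]

theorem cdfOf_mem_Ioo (hnn : ∀ x, 0 ≤ φ x) (hi : Integrable φ) {y : ℝ}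
    (hy : ∀ᶠ t in 𝓝 y, 0 < φ t) : cdfOf φ y ∈ Ioo 0 (∫ t, φ t) := by
  obtain ⟨ε, hε, hpos⟩ := (nhds_basis_Ioo_pos y).eventually_iff.1 hy
  have hmono := strictMonoOn_cdfOf hi ordConnected_Ioo hpos
  have hy' : y ∈ Ioo (y - ε) (y + ε) := ⟨by linarith, by linarith⟩
  exact ⟨(cdfOf_nonneg hnn _).trans_lt
      (hmono (a := y - ε / 2) ⟨by linarith, by linarith⟩ hy' (by linarith)),
    (hmono (b := y + ε / 2) hy' ⟨by linarith, by linarith⟩ (by linarith)).trans_le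
      (cdfOf_le_integral hnn hi _)⟩

theorem tendsto_cdfOf_atTop (hi : Integrable φ) : Tendsto (cdfOf φ) atTop (𝓝 (∫ t, φ t)) :=
  (aecover_Iic tendsto_id).integral_tendsto_of_countably_generated hi

theorem tendsto_cdfOf_atBot (hi : Integrable φ) : Tendsto (cdfOf φ) atBot (𝓝 0) := by
  have h := (tendsto_const_nhds (x := ∫ t, φ t)).sub
    ((aecover_Ioi tendsto_id).integral_tendsto_of_countably_generated hi)
  rw [sub_self] at h
  refine h.congr fun x => ?_
  rw [← cdfOf_add_integral_Ioi hi x, id, add_sub_cancel_right]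

theorem Ioo_subset_range_cdfOf (hc : Continuous φ) (hi : Integrable φ) :
    Ioo 0 (∫ t, φ t) ⊆ range (cdfOf φ) := fun _ ht =>
  mem_range_of_exists_le_of_exists_ge (continuous_cdfOf hc hi)
    ((tendsto_cdfOf_atBot hi).eventually (eventually_le_nhds ht.1)).exists
    ((tendsto_cdfOf_atTop hi).eventually (eventually_ge_nhds ht.2)).exists

theorem cdfOf_eq_zero_of_forall_le {x : ℝ} (h : ∀ t ≤ x, φ t = 0) : cdfOf φ x = 0 :=
  setIntegral_eq_zero_of_forall_eq_zero fun t ht => h t ht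

theorem cdfOf_eq_integral_of_forall_gt (hi : Integrable φ) {x : ℝ} (h : ∀ t, x < t → φ t = 0) :
    cdfOf φ x = ∫ t, φ t := by
  rw [← cdfOf_add_integral_Ioi hi x,
    setIntegral_eq_zero_of_forall_eq_zero (t := Ioi x) fun t ht => h t ht, add_zero]

theorem mem_of_cdfOf_mem_Ioo (hi : Integrable φ) {I : Set ℝ} (hI : I.OrdConnected)
    (hsupp : ∀ x ∉ I, φ x = 0) {x : ℝ} (hx : cdfOf φ x ∈ Ioo 0 (∫ t, φ t)) : x ∈ I := by
  by_contra hxI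
  have hside : (∀ t ≤ x, t ∉ I) ∨ (∀ t, x < t → t ∉ I) := by
    by_contra! h
    obtain ⟨⟨p, hpx, hp⟩, ⟨p', hxp', hp'⟩⟩ := h
    exact hxI (hI.out hp hp' ⟨hpx, hxp'.le⟩)
  rcases hside with h | h
  · exact hx.1.ne' (cdfOf_eq_zero_of_forall_le fun t ht => hsupp t (h t ht))
  · exact hx.2.ne (cdfOf_eq_integral_of_forall_gt hi fun t ht => hsupp t (h t ht))

end cdfOf

/-- `K` is the binding map `F₂⁻¹ ∘ F₀ : I₀ → I₂`, described without inverting `F₂`. -/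
def IsBindingMap (φ₀ φ₂ : ℝ → ℝ) (I₀ I₂ : Set ℝ) (K : ℝ → ℝ) : Prop :=
  ∀ x ∈ I₀, K x ∈ I₂ ∧ cdfOf φ₂ (K x) = cdfOf φ₀ x

namespace IsBindingMap

variable {φ₀ φ₂ K : ℝ → ℝ} {I₀ I₂ : Set ℝ}

theorem injOn (hK : IsBindingMap φ₀ φ₂ I₀ I₂ K) (hinj₀ : InjOn (cdfOf φ₀) I₀) : InjOn K I₀ :=
  fun x hx y hy hxy => hinj₀ hx hy (by rw [← (hK x hx).2, ← (hK y hy).2, hxy])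

theorem hasDerivAt (hK : IsBindingMap φ₀ φ₂ I₀ I₂ K) (hc₀ : Continuous φ₀)
    (hi₀ : Integrable φ₀) (hI₀ : IsOpen I₀) (hc₂ : Continuous φ₂) (hi₂ : Integrable φ₂)
    (hI₂ : IsOpen I₂) (hinj₂ : InjOn (cdfOf φ₂) I₂) (hpos₂ : ∀ y ∈ I₂, 0 < φ₂ y)
    {x : ℝ} (hx : x ∈ I₀) : HasDerivAt K (φ₀ x / φ₂ (K x)) x :=
  (hasStrictDerivAt_cdfOf hc₂ hi₂ (K x)).hasDerivAt_of_comp_eq (hpos₂ _ (hK x hx).1).ne'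
    (hasDerivAt_cdfOf hc₀ hi₀ x) hinj₂ (hI₂.mem_nhds (hK x hx).1)
    (eventually_of_mem (hI₀.mem_nhds hx) hK)

theorem image_eq (hK : IsBindingMap φ₀ φ₂ I₀ I₂ K) (hc₀ : Continuous φ₀) (hi₀ : Integrable φ₀)
    (hI₀ : I₀.OrdConnected) (hsupp₀ : ∀ x ∉ I₀, φ₀ x = 0) (hnn₂ : ∀ y, 0 ≤ φ₂ y)
    (hi₂ : Integrable φ₂) (hI₂ : IsOpen I₂) (hinj₂ : InjOn (cdfOf φ₂) I₂)
    (hpos₂ : ∀ y ∈ I₂, 0 < φ₂ y) (hmass : ∫ t, φ₂ t = ∫ t, φ₀ t) : K '' I₀ = I₂ := by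
  refine (image_subset_iff.2 fun x hx => (hK x hx).1).antisymm fun y hy => ?_
  have hFy : cdfOf φ₂ y ∈ Ioo 0 (∫ t, φ₀ t) :=
    hmass ▸ cdfOf_mem_Ioo hnn₂ hi₂ (eventually_of_mem (hI₂.mem_nhds hy) hpos₂)
  obtain ⟨x, hx⟩ := Ioo_subset_range_cdfOf hc₀ hi₀ hFy
  have hxI : x ∈ I₀ := mem_of_cdfOf_mem_Ioo hi₀ hI₀ hsupp₀ (hx ▸ hFy)
  exact ⟨x, hxI, hinj₂ (hK x hxI).1 hy ((hK x hxI).2.trans hx)⟩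

end IsBindingMap

theorem stmt9_general
    (φ₂ q φ₀ : ℝ → ℝ) (I₂ I₀ : Set ℝ)
    (hφ₂c : Continuous φ₂) (hφ₂nn : ∀ x, 0 ≤ φ₂ x)
    (hφ₂i : Integrable φ₂) (hφ₂1 : ∫ x, φ₂ x = 1)
    (hI₂o : IsOpen I₂) (hI₂conn : I₂.OrdConnected)
    (hpos₂ : ∀ x, 0 < φ₂ x ↔ x ∈ I₂)
    (hqi : Integrable q)
    (hφ₀c : Continuous φ₀) (hφ₀nn : ∀ x, 0 ≤ φ₀ x)
    (hφ₀i : Integrable φ₀) (hφ₀1 : ∫ x, φ₀ x = 1)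
    (hI₀o : IsOpen I₀) (hI₀conn : I₀.OrdConnected)
    (hpos₀ : ∀ x, 0 < φ₀ x ↔ x ∈ I₀)
    (K₀ : ℝ → ℝ)
    (hK₀ : ∀ x ∈ I₀, K₀ x ∈ I₂ ∧ cdfOf φ₂ (K₀ x) = cdfOf φ₀ x)
    (hint₀ : IntegrableOn (fun x => x * (φ₀ x / φ₂ (K₀ x)) * q (K₀ x)) I₀)
    (a : ℝ) :
    (∫ x in (fun s => s + a) '' I₀,
        x * (φ₀ (x - a) / φ₂ (K₀ (x - a))) * q (K₀ (x - a)))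
      = a * (∫ y in I₂, q y) + ∫ x in I₀, x * (φ₀ x / φ₂ (K₀ x)) * q (K₀ x) := by
  have hK : IsBindingMap φ₀ φ₂ I₀ I₂ K₀ := hK₀
  have hI₀m := hI₀o.measurableSet
  have hpos₂' : ∀ y ∈ I₂, 0 < φ₂ y := fun y hy => (hpos₂ y).2 hy
  have hinj₂ := (strictMonoOn_cdfOf hφ₂i hI₂conn hpos₂').injOn
  have hinj := hK.injOn (strictMonoOn_cdfOf hφ₀i hI₀conn fun x hx => (hpos₀ x).2 hx).injOn
  have hsupp₀ : ∀ x ∉ I₀, φ₀ x = 0 := fun x hx =>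
    le_antisymm (not_lt.1 fun h => hx ((hpos₀ x).1 h)) (hφ₀nn x)
  have himage : K₀ '' I₀ = I₂ := hK.image_eq hφ₀c hφ₀i hI₀conn hsupp₀ hφ₂nn hφ₂i hI₂o hinj₂
    hpos₂' (hφ₂1.trans hφ₀1.symm)
  have hderiv : ∀ x ∈ I₀, HasDerivWithinAt K₀ (φ₀ x / φ₂ (K₀ x)) I₀ x := fun x hx =>
    (hK.hasDerivAt hφ₀c hφ₀i hI₀o hφ₂c hφ₂i hI₂o hinj₂ hpos₂' hx).hasDerivWithinAt
  have hderiv_nn : ∀ x ∈ I₀, 0 ≤ φ₀ x / φ₂ (K₀ x) := fun x _ => div_nonneg (hφ₀nn x) (hφ₂nn _)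
  have hbond := integral_image_eq_integral_deriv_mul_of_nonneg hI₀m hderiv hinj hderiv_nn q
  have hq : IntegrableOn q (K₀ '' I₀) := himage ▸ hqi.integrableOn
  have hint := IntegrableOn.deriv_mul_comp_of_nonneg hq hI₀m hderiv hinj hderiv_nn
  rw [(measurePreserving_add_right volume a).setIntegral_image_emb (measurableEmbedding_addRight a),
    ← himage, hbond, ← integral_const_mul, ← integral_add (hint.const_mul a) hint₀]
  refine setIntegral_congr_fun hI₀m fun x _ => ?_
  simp only [add_sub_cancel_right]
  ring

/-- Modigliani–Miller separation: let `φ₀` be a cash-flow density positive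
exactly on an open interval `I₀ ⊆ (0,∞)` with binding map `K₀` and finite portfolio value,
and let `a > 0`.  The shifted cash flow has density `x ↦ φ₀ (x − a)` and binding map
`x ↦ K₀ (x − a)`, and its portfolio value equals `a · ∫_{I₂} q + V(φ₀)`:  adding a
risk-free amount `a` adds `a` times the bond price to the value. -/
theorem stmt9
    (φ₂ q φ₀ : ℝ → ℝ) (I₂ I₀ : Set ℝ)
    (hφ₂c : Continuous φ₂) (hφ₂nn : ∀ x, 0 ≤ φ₂ x)
    (hφ₂i : Integrable φ₂) (hφ₂1 : ∫ x, φ₂ x = 1)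
    (hI₂o : IsOpen I₂) (hI₂conn : I₂.OrdConnected)
    (hpos₂ : ∀ x, 0 < φ₂ x ↔ x ∈ I₂)
    (hqnn : ∀ y, 0 ≤ q y) (hqi : Integrable q)
    (hφ₀c : Continuous φ₀) (hφ₀nn : ∀ x, 0 ≤ φ₀ x)
    (hφ₀i : Integrable φ₀) (hφ₀1 : ∫ x, φ₀ x = 1)
    (hI₀o : IsOpen I₀) (hI₀conn : I₀.OrdConnected)
    (hpos₀ : ∀ x, 0 < φ₀ x ↔ x ∈ I₀)
    (hI₀pos : I₀ ⊆ Set.Ioi (0:ℝ))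
    (K₀ : ℝ → ℝ)
    (hK₀ : ∀ x ∈ I₀, K₀ x ∈ I₂ ∧ cdfOf φ₂ (K₀ x) = cdfOf φ₀ x)
    (hint₀ : IntegrableOn (fun x => x * (φ₀ x / φ₂ (K₀ x)) * q (K₀ x)) I₀)
    (a : ℝ) (ha : 0 < a) :
    (∫ x in (fun s => s + a) '' I₀,
        x * (φ₀ (x - a) / φ₂ (K₀ (x - a))) * q (K₀ (x - a)))
      = a * (∫ y in I₂, q y) + ∫ x in I₀, x * (φ₀ x / φ₂ (K₀ x)) * q (K₀ x) :=
  stmt9_general φ₂ q φ₀ I₂ I₀ hφ₂c hφ₂nn hφ₂i hφ₂1 hI₂o hI₂conn hpos₂ hqi hφ₀c hφ₀nn hφ₀i hφ₀1 hI₀o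
    hI₀conn hpos₀ K₀ hK₀ hint₀ a
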